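/- arXiv:2601.22945 — 6 statements merged into one kernel-verified Lean document; each statement's English description precedes it below -/
import Mathlib

section
/- Suppose mechanism M₁ : X → Prob(T₁) is (S, Q_x, κ₁, δ₁)-persuasively private, and for every t ∈ T₁ the mechanism M₂((·,t), ·) : X → Prob(T₂) is (S, Q_x, κ₂, δ₂)-persuasively private, where the prior class Q_x is conjugate to both M₁ and M₂ (closed under Bayes updating almost surely). Then the composed mechanism M₁ ⊗ M₂ releasing (T₁, T₂) is (S, Q_x, κ₁+κ₂, δ₁+δ₂)-persuasively private. -/
open MeasureTheory ProbabilityTheory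
open scoped ENNReal

/-!
Let `A` be the event that the first release costs at most `κ₁` and `B` the event that the
second release, scored from the intermediate posterior `Q_{T₁}`, costs at most `κ₂`. The score
difference telescopes through `Q_{T₁}`, so on `A ∩ B` the total cost is at most `κ₁ + κ₂`.
`A` fails with probability at most `δ₁` by privacy of `M₁`. Since `Q_{T₁}` is again an admissible
prior for almost every `T₁`, privacy of `M₂(·, T₁)` bounds the conditional failure probability
of `B` by `δ₂`, and integrating over `T₁` bounds its failure probability by `δ₂`. A union bound
finishes the proof.
-/

section HighProbability

variable {α : Type*} [MeasurableSpace α] {μ : Measure α} [IsProbabilityMeasure μ] {s : Set α}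
  {δ : ℝ}

theorem prob_compl_le_ofReal_of_ofReal_one_sub_le (hs : MeasurableSet s)
    (h : ENNReal.ofReal (1 - δ) ≤ μ s) : μ sᶜ ≤ ENNReal.ofReal δ := by
  rw [prob_compl_eq_one_sub hs, tsub_le_iff_left]
  calc (1 : ℝ≥0∞) = ENNReal.ofReal (1 - δ + δ) := by simp
    _ ≤ ENNReal.ofReal (1 - δ) + ENNReal.ofReal δ := ENNReal.ofReal_add_le
    _ ≤ μ s + ENNReal.ofReal δ := by gcongr

theorem ofReal_one_sub_le_prob_of_prob_compl_le (hδ : 0 ≤ δ) (h : μ sᶜ ≤ ENNReal.ofReal δ) :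
    ENNReal.ofReal (1 - δ) ≤ μ s := by
  rw [ENNReal.ofReal_sub _ hδ, ENNReal.ofReal_one, tsub_le_iff_right]
  calc (1 : ℝ≥0∞) = μ Set.univ := measure_univ.symm
    _ ≤ μ s + μ sᶜ := measure_univ_le_add_compl s
    _ ≤ μ s + ENNReal.ofReal δ := by gcongr

end HighProbability

namespace ProbabilityTheory.Kernel

variable {α β γ : Type*} [MeasurableSpace α] [MeasurableSpace β] [MeasurableSpace γ]
  {κ : Kernel α β} {η : Kernel (α × β) γ}

theorem compProd_apply_fst_preimage [IsSFiniteKernel κ] [IsMarkovKernel η] {a : α} {s : Set β}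
    (hs : MeasurableSet s) : (κ ⊗ₖ η) a (Prod.fst ⁻¹' s) = κ a s := by
  rw [← Measure.map_apply measurable_fst hs, ← fst_apply, fst_compProd]

theorem compProd_apply_le_of_ae_le [IsMarkovKernel κ] [IsSFiniteKernel η] {a : α}
    {s : Set (β × γ)} (hs : MeasurableSet s) {c : ℝ≥0∞}
    (h : ∀ᵐ b ∂(κ a), η (a, b) (Prod.mk b ⁻¹' s) ≤ c) : (κ ⊗ₖ η) a s ≤ c := by
  rw [compProd_apply hs]
  calc ∫⁻ b, η (a, b) (Prod.mk b ⁻¹' s) ∂(κ a) ≤ ∫⁻ _, c ∂(κ a) := lintegral_mono_ae h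
    _ = c := by simp

end ProbabilityTheory.Kernel

/-- Composition of persuasive privacy: if `M₁` is `(S, 𝒬ₓ, κ₁, δ₁)`-PP and, for
every `t₁`, `M₂(·, t₁)` is `(S, 𝒬ₓ, κ₂, δ₂)`-PP, with the prior class `𝒬ₓ` conjugate (closed
under Bayes updating, a.s.) and posteriors updated sequentially, then the composed mechanism
`M₁ ⊗ M₂` is `(S, 𝒬ₓ, κ₁ + κ₂, δ₁ + δ₂)`-PP. Posteriors are given abstractly: `post₁ Q t₁`
is `Q(·∣M₁,t₁)`, `post₂ t₁ Q' t₂` is the update of `Q'` by `M₂(·,t₁)` on observing `t₂`, and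
`post₁₂ Q (t₁,t₂) = Q(·∣M₁⊗M₂,(t₁,t₂))` which Bayes-coherently equals the sequential update. -/
theorem stmt5 {X T₁ T₂ P : Type*}
    [MeasurableSpace X] [MeasurableSpace T₁] [MeasurableSpace T₂]
    (M₁ : Kernel X T₁) [IsMarkovKernel M₁]
    (M₂ : Kernel (X × T₁) T₂) [IsMarkovKernel M₂]
    (S : P → X → ℝ) (Qs : X → Set P)
    (post₁ : P → T₁ → P) (post₂ : T₁ → P → T₂ → P) (post₁₂ : P → T₁ × T₂ → P)
    (κ₁ κ₂ δ₁ δ₂ : ℝ) (hδ₁ : 0 ≤ δ₁) (hδ₂ : 0 ≤ δ₂)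
    (hmeas₁ : ∀ x Q, MeasurableSet {t₁ : T₁ | S Q x - S (post₁ Q t₁) x ≤ κ₁})
    (hmeas₂ : ∀ x Q, MeasurableSet
      {p : T₁ × T₂ | S (post₁ Q p.1) x - S (post₂ p.1 (post₁ Q p.1) p.2) x ≤ κ₂})
    (hcoh : ∀ Q t₁ t₂, post₁₂ Q (t₁, t₂) = post₂ t₁ (post₁ Q t₁) t₂)
    (hconj : ∀ x, ∀ Q ∈ Qs x, ∀ᵐ t₁ ∂(M₁ x), post₁ Q t₁ ∈ Qs x)
    (hPP₁ : ∀ x, ∀ Q ∈ Qs x,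
      M₁ x {t₁ | S Q x - S (post₁ Q t₁) x ≤ κ₁} ≥ ENNReal.ofReal (1 - δ₁))
    (hPP₂ : ∀ t₁ x, ∀ Q ∈ Qs x,
      M₂ (x, t₁) {t₂ | S Q x - S (post₂ t₁ Q t₂) x ≤ κ₂} ≥ ENNReal.ofReal (1 - δ₂)) :
    ∀ x, ∀ Q ∈ Qs x,
      (M₁ ⊗ₖ M₂) x {p : T₁ × T₂ | S Q x - S (post₁₂ Q p) x ≤ κ₁ + κ₂} ≥
        ENNReal.ofReal (1 - (δ₁ + δ₂)) := by
  intro x Q hQ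
  set A₁ : Set T₁ := {t₁ | S Q x - S (post₁ Q t₁) x ≤ κ₁}
  set B : Set (T₁ × T₂) := {p | S (post₁ Q p.1) x - S (post₂ p.1 (post₁ Q p.1) p.2) x ≤ κ₂}
  have hA : (M₁ ⊗ₖ M₂) x (Prod.fst ⁻¹' A₁)ᶜ ≤ ENNReal.ofReal δ₁ := by
    rw [← Set.preimage_compl, Kernel.compProd_apply_fst_preimage (hmeas₁ x Q).compl]
    exact prob_compl_le_ofReal_of_ofReal_one_sub_le (hmeas₁ x Q) (hPP₁ x Q hQ)
  have hB : (M₁ ⊗ₖ M₂) x Bᶜ ≤ ENNReal.ofReal δ₂ := by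
    refine Kernel.compProd_apply_le_of_ae_le (hmeas₂ x Q).compl ?_
    filter_upwards [hconj x Q hQ] with t₁ ht₁
    exact prob_compl_le_ofReal_of_ofReal_one_sub_le ((hmeas₂ x Q).preimage measurable_prodMk_left)
      (hPP₂ t₁ x _ ht₁)
  have htelescope : Prod.fst ⁻¹' A₁ ∩ B ⊆
      {p : T₁ × T₂ | S Q x - S (post₁₂ Q p) x ≤ κ₁ + κ₂} := by
    rintro ⟨t₁, t₂⟩ ⟨h₁, h₂⟩
    have h₁ : S Q x - S (post₁ Q t₁) x ≤ κ₁ := h₁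
    have h₂ : S (post₁ Q t₁) x - S (post₂ t₁ (post₁ Q t₁) t₂) x ≤ κ₂ := h₂
    show S Q x - S (post₁₂ Q (t₁, t₂)) x ≤ κ₁ + κ₂
    rw [hcoh]
    linarith
  refine ofReal_one_sub_le_prob_of_prob_compl_le (add_nonneg hδ₁ hδ₂) ?_
  calc _ ≤ (M₁ ⊗ₖ M₂) x (Prod.fst ⁻¹' A₁ ∩ B)ᶜ := measure_mono (Set.compl_subset_compl.2 htelescope)
    _ ≤ (M₁ ⊗ₖ M₂) x (Prod.fst ⁻¹' A₁)ᶜ + (M₁ ⊗ₖ M₂) x Bᶜ := by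
      rw [Set.compl_inter]; exact measure_union_le _ _
    _ ≤ ENNReal.ofReal δ₁ + ENNReal.ofReal δ₂ := add_le_add hA hB
    _ = ENNReal.ofReal (δ₁ + δ₂) := (ENNReal.ofReal_add hδ₁ hδ₂).symm
end

section
/- Fix a dataset x and a neighbor x′ ∼ x, and assume the mechanism densities satisfy m(T|x′) > 0 almost surely under P_x. For w ∈ (0,1), define g(w) = P_x[ m(T|x′)/m(T|x) ≥ (e^{−ε} − w)/(1 − w) ]. Then g(w) = 1 for w ∈ [e^{−ε}, 1), g is non-decreasing on (0, e^{−ε}), and inf_{w∈(0,1)} g(w) = P_x[ m(T|x)/m(T|x′) ≤ e^{ε} ]. -/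
/-!
With `c = e^{-ε} < 1`, the threshold `w ↦ (c - w) / (1 - w)` is a decreasing involution which maps
`(0, 1)` onto `(-∞, c)` and is nonpositive on `[c, 1)`. Hence the infimum over `w` is the infimum
of `P[a ≤ g/f]` over `a < c`, which is `P[c ≤ g/f]` by continuity of measure from above, and
`c ≤ g/f ↔ f/g ≤ e^ε` wherever `f, g > 0`.
-/

open MeasureTheory Set

noncomputable def threshold (c w : ℝ) : ℝ := (c - w) / (1 - w)

section threshold

variable {c w : ℝ}

theorem threshold_nonpos (hcw : c ≤ w) (hw : w < 1) : threshold c w ≤ 0 :=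
  div_nonpos_of_nonpos_of_nonneg (by linarith) (by linarith)

theorem antitoneOn_threshold (hc : c ≤ 1) : AntitoneOn (threshold c) (Iio 1) := by
  intro v hv w hw hvw
  simp only [threshold, mem_Iio] at *
  rw [div_le_div_iff₀ (by linarith) (by linarith)]
  nlinarith

theorem sub_threshold (hw : w ≠ 1) : c - threshold c w = w * (1 - c) / (1 - w) := by
  have : 1 - w ≠ 0 := sub_ne_zero.2 hw.symm
  rw [threshold]
  field_simp
  ring

theorem one_sub_threshold (hw : w ≠ 1) : 1 - threshold c w = (1 - c) / (1 - w) := by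
  have : 1 - w ≠ 0 := sub_ne_zero.2 hw.symm
  rw [threshold]
  field_simp
  ring

theorem threshold_threshold (hc : c ≠ 1) (hw : w ≠ 1) : threshold c (threshold c w) = w := by
  have : 1 - w ≠ 0 := sub_ne_zero.2 hw.symm
  have : 1 - c ≠ 0 := sub_ne_zero.2 hc.symm
  rw [threshold, sub_threshold hw, one_sub_threshold hw]
  field_simp

theorem threshold_lt (hc : c < 1) (hw : w ∈ Ioo 0 1) : threshold c w < c := by
  rw [← sub_pos, sub_threshold hw.2.ne]
  exact div_pos (mul_pos hw.1 (sub_pos.2 hc)) (sub_pos.2 hw.2)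

theorem threshold_mem_Ioo (hcw : w < c) (hc : c < 1) : threshold c w ∈ Ioo 0 1 := by
  refine ⟨div_pos (sub_pos.2 hcw) (sub_pos.2 (hcw.trans hc)), ?_⟩
  rw [← sub_pos, one_sub_threshold (hcw.trans hc).ne]
  exact div_pos (sub_pos.2 hc) (sub_pos.2 (hcw.trans hc))

theorem image_threshold_Ioo (hc : c < 1) : threshold c '' Ioo 0 1 = Iio c := by
  refine Subset.antisymm (image_subset_iff.2 fun w hw => threshold_lt hc hw) fun a ha => ?_
  exact ⟨threshold c a, threshold_mem_Ioo ha hc, threshold_threshold hc.ne (ha.trans hc).ne⟩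

end threshold

theorem biInf_Iio_measure_setOf_le {α : Type*} [MeasurableSpace α] (μ : Measure α)
    [IsFiniteMeasure μ] {X : α → ℝ} (hX : Measurable X) (c : ℝ) :
    ⨅ a ∈ Iio c, μ {x | a ≤ X x} = μ {x | c ≤ X x} := by
  have hinter : ⋂ a : Iio c, {x | (a : ℝ) ≤ X x} = {x | c ≤ X x} := by
    ext x
    simp only [mem_iInter, mem_ofPred_eq, Subtype.forall, mem_Iio]
    exact forall_lt_imp_le_iff_le_of_dense
  rw [iInf_subtype', ← hinter, Antitone.measure_iInter]
  · exact fun a b hab => ofPred_subset_ofPred.2 fun x => le_trans hab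
  · exact fun a => (measurableSet_le measurable_const hX).nullMeasurableSet
  · exact ⟨⟨c - 1, by simp⟩, measure_ne_top _ _⟩

/-- Fix `x ∼ x′`; write `f = m(·|x)`, `g = m(·|x′)` for the mechanism densities,
with `f, g > 0` a.s. under `P_x = μ`. For `w ∈ (0,1)` let
`G(w) = P_x[g(T)/f(T) ≥ (e^{−ε} − w)/(1 − w)]`. Then `G(w) = 1` for `w ∈ [e^{−ε}, 1)`, `G`
is non-decreasing on `(0, e^{−ε})`, and `inf_{w∈(0,1)} G(w) = P_x[f(T)/g(T) ≤ e^ε]`. -/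
theorem stmt7 {T : Type*} [MeasurableSpace T] (μ : Measure T) [IsProbabilityMeasure μ]
    (f g : T → ℝ) (hf : Measurable f) (hg : Measurable g)
    (hfpos : ∀ᵐ t ∂μ, 0 < f t) (hgpos : ∀ᵐ t ∂μ, 0 < g t)
    (ε : ℝ) (hε : 0 < ε) :
    (∀ w ∈ Set.Ico (Real.exp (-ε)) 1,
        μ {t | (Real.exp (-ε) - w) / (1 - w) ≤ g t / f t} = 1) ∧
    MonotoneOn (fun w => μ {t | (Real.exp (-ε) - w) / (1 - w) ≤ g t / f t})
      (Set.Ioo 0 (Real.exp (-ε))) ∧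
    (⨅ w ∈ Set.Ioo (0:ℝ) 1, μ {t | (Real.exp (-ε) - w) / (1 - w) ≤ g t / f t}) =
      μ {t | f t / g t ≤ Real.exp ε} := by
  change (∀ w ∈ Ico _ 1, μ {t | threshold (Real.exp (-ε)) w ≤ g t / f t} = 1) ∧
    MonotoneOn (fun w => μ {t | threshold (Real.exp (-ε)) w ≤ g t / f t}) (Ioo 0 _) ∧
    (⨅ w ∈ Ioo (0:ℝ) 1, μ {t | threshold (Real.exp (-ε)) w ≤ g t / f t}) = _
  have hc : Real.exp (-ε) < 1 := Real.exp_lt_one_iff.2 (neg_lt_zero.2 hε)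
  refine ⟨fun w hw => ?_, fun v hv w hw hvw => ?_, ?_⟩
  · refine (mem_ae_iff_prob_eq_one (measurableSet_le measurable_const (hg.div hf))).1 ?_
    filter_upwards [hfpos, hgpos] with t hft hgt
    exact (threshold_nonpos hw.1 hw.2).trans (div_pos hgt hft).le
  · refine measure_mono (ofPred_subset_ofPred.2 fun t => le_trans ?_)
    exact antitoneOn_threshold hc.le (hv.2.trans hc) (hw.2.trans hc) hvw
  · rw [← iInf_image (f := threshold _) (g := fun a => μ {t | a ≤ g t / f t}),
      image_threshold_Ioo hc, biInf_Iio_measure_setOf_le μ (X := fun t => g t / f t) (hg.div hf)]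
    refine measure_congr ?_
    filter_upwards [hfpos, hgpos] with t hft hgt
    change (Real.exp (-ε) ≤ g t / f t) = (f t / g t ≤ Real.exp ε)
    rw [Real.exp_neg, inv_le_comm₀ (Real.exp_pos ε) (div_pos hgt hft), inv_div]
end

section
/- A mechanism M with conditional densities m(·|x) is (ε, δ)-probabilistically differentially private if and only if it is (L, ℋ, ε, δ)-persuasively private, where L is the discrete negative log-probability score and ℋ is the class of two-point priors supported on neighboring pairs of datasets. That is, inf_{x∼x′} P_x[m(T|x) ≤ e^ε m(T|x′)] ≥ 1−δ holds if and only if inf_{x∈X} inf_{Q∈ℋ} P_x[−log Q({x}) + log Q({x}|T) ≤ ε] ≥ 1−δ. -/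
open MeasureTheory Filter Topology Set

/-- The mechanism `M(x,·)` given by the density `m(·|x)` with respect to the common
dominating measure `ν`: so `P_x = M(x,·) = ν.withDensity (m(·|x))`. -/
noncomputable def mech {X T : Type*} [MeasurableSpace T] (ν : Measure T)
    (m : X → T → ℝ) (x : X) : Measure T :=
  ν.withDensity fun t => ENNReal.ofReal (m x t)

/-- The relative negative log-probability privacy score `Δ_L(Q,t,x) = L(Q,x) − L(Q_t,x)` for
the two-point prior `Q = w δ_z + (1−w) δ_{z′}`: it equals
`log m(t|x) − log (w m(t|z) + (1−w) m(t|z′))` when `x ∈ {z, z′}` and `0` otherwise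
(the latter also encoding the convention `−∞ − (−∞) = 0`). -/
noncomputable def relScore {X T : Type*} [DecidableEq X] (m : X → T → ℝ)
    (x z z' : X) (w : ℝ) (t : T) : ℝ :=
  if x = z ∨ x = z' then
    Real.log (m x t) - Real.log (w * m z t + (1 - w) * m z' t)
  else 0

/-!
Everything reduces to a pointwise statement about `a = m(t|x)` and `b = m(t|x′)`, on the
full-measure event `a > 0`. For the prior with weight `w` on `x`, the score is at most `ε` iff
`a ≤ e^ε (w a + (1 - w) b)`. Since `a ≤ e^ε a`, this condition is implied by `a ≤ e^ε b` (the
case `w = 0`), and it only becomes harder as `w` decreases; so the events for `w → 0` decrease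
to the differential-privacy event `a ≤ e^ε b`, and continuity from above turns the bounds
`1 - δ` for all `w ∈ (0,1)` into the bound for the limit. Priors on pairs not containing `x`
give score `0 ≤ ε` everywhere.
-/

lemma log_sub_log_le_iff_le_exp_mul {a c ε : ℝ} (ha : 0 < a) (hc : 0 < c) :
    Real.log a - Real.log c ≤ ε ↔ a ≤ Real.exp ε * c := by
  rw [sub_le_iff_le_add, Real.log_le_iff_le_exp ha, Real.exp_add, Real.exp_log hc]

lemma le_exp_mul_mix_of_le_weight {a b w w' ε : ℝ} (ha : 0 ≤ a) (hε : 0 ≤ ε)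
    (hw'w : w' ≤ w) (hw : w ≤ 1) (h : a ≤ Real.exp ε * (w' * a + (1 - w') * b)) :
    a ≤ Real.exp ε * (w * a + (1 - w) * b) := by
  have hexp : 1 ≤ Real.exp ε := Real.one_le_exp hε
  rcases le_total b a with hba | hab
  · calc a ≤ Real.exp ε * (w' * a + (1 - w') * b) := h
      _ ≤ Real.exp ε * (w * a + (1 - w) * b) :=
        mul_le_mul_of_nonneg_left (by nlinarith) (Real.exp_pos ε).le
  · calc a ≤ Real.exp ε * a := le_mul_of_one_le_left ha hexp
      _ ≤ Real.exp ε * (w * a + (1 - w) * b) :=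
        mul_le_mul_of_nonneg_left (by nlinarith) (Real.exp_pos ε).le

lemma le_exp_mul_of_tendsto_weight {a b ε : ℝ} {w : ℕ → ℝ} (hw : Tendsto w atTop (𝓝 0))
    (h : ∀ n, a ≤ Real.exp ε * (w n * a + (1 - w n) * b)) : a ≤ Real.exp ε * b := by
  have hlim : Tendsto (fun n => Real.exp ε * (w n * a + (1 - w n) * b)) atTop
      (𝓝 (Real.exp ε * (0 * a + (1 - 0) * b))) :=
    ((hw.mul_const a).add ((tendsto_const_nhds.sub hw).mul_const b)).const_mul _
  simpa using ge_of_tendsto' hlim h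

lemma le_measure_iInter_of_antitone {α : Type*} [MeasurableSpace α] {μ : Measure α}
    [IsFiniteMeasure μ] {s : ℕ → Set α} (hs : Antitone s) (hsm : ∀ n, NullMeasurableSet (s n) μ)
    {c : ENNReal} (h : ∀ n, c ≤ μ (s n)) : c ≤ μ (⋂ n, s n) := by
  rw [hs.measure_iInter hsm ⟨0, measure_ne_top μ _⟩]
  exact le_iInf h

lemma ae_mech_density_pos {X T : Type*} [MeasurableSpace T] {ν : Measure T}
    {m : X → T → ℝ} {x : X} (hm : Measurable (m x)) : ∀ᵐ t ∂mech ν m x, 0 < m x t := by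
  rw [mech, ae_withDensity_iff hm.ennreal_ofReal]
  exact ae_of_all _ fun t ht => ENNReal.ofReal_pos.mp (pos_iff_ne_zero.mpr ht)

section Mechanism

variable {X T : Type*} {m : X → T → ℝ} [DecidableEq X]

lemma relScore_of_ne {x z z' : X} (hz : x ≠ z) (hz' : x ≠ z') (w : ℝ) (t : T) :
    relScore m x z z' w t = 0 := by
  simp [relScore, hz, hz']

lemma relScore_comm (x z z' : X) (w : ℝ) (t : T) :
    relScore m x z z' w t = relScore m x z' z (1 - w) t := by
  simp only [relScore, or_comm, sub_sub_cancel, add_comm]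

lemma relScore_self_le_iff {x x' : X} {w ε : ℝ} {t : T} (hw : w ∈ Ioo (0 : ℝ) 1)
    (ha : 0 < m x t) (hb : 0 ≤ m x' t) :
    relScore m x x x' w t ≤ ε ↔ m x t ≤ Real.exp ε * (w * m x t + (1 - w) * m x' t) := by
  have hc : 0 < w * m x t + (1 - w) * m x' t := by
    have := hw.1; have := hw.2; positivity
  rw [relScore, if_pos (Or.inl rfl), log_sub_log_le_iff_le_exp_mul ha hc]

variable [MeasurableSpace T] {ν : Measure T} (hm : ∀ x, Measurable (m x))
  (hmnn : ∀ x t, 0 ≤ m x t) {ε : ℝ} {c : ENNReal}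
include hm hmnn

lemma le_mech_relScore_self_of_le_mech {x x' : X} (hε : 0 ≤ ε) {w : ℝ} (hw : w ∈ Ioo (0 : ℝ) 1)
    (h : c ≤ mech ν m x {t | m x t ≤ Real.exp ε * m x' t}) :
    c ≤ mech ν m x {t | relScore m x x x' w t ≤ ε} := by
  refine h.trans (measure_mono_ae ?_)
  filter_upwards [ae_mech_density_pos (hm x)] with t ha (hdp : m x t ≤ Real.exp ε * m x' t)
  refine (relScore_self_le_iff hw ha (hmnn x' t)).mpr ?_
  exact le_exp_mul_mix_of_le_weight (w' := 0) ha.le hε hw.1.le hw.2.le (by simpa using hdp)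

lemma le_mech_of_forall_le_mech_relScore_self {x x' : X} [IsFiniteMeasure (mech ν m x)]
    (hε : 0 ≤ ε) (h : ∀ w ∈ Ioo (0 : ℝ) 1, c ≤ mech ν m x {t | relScore m x x x' w t ≤ ε}) :
    c ≤ mech ν m x {t | m x t ≤ Real.exp ε * m x' t} := by
  obtain ⟨w, hw_anti, hw_mem, hw_lim⟩ := exists_seq_strictAnti_tendsto' (zero_lt_one' ℝ)
  let A : ℕ → Set T := fun n =>
    {t | 0 < m x t ∧ m x t ≤ Real.exp ε * (w n * m x t + (1 - w n) * m x' t)}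
  have hA_anti : Antitone A := fun i j hij t ⟨ha, ht⟩ =>
    ⟨ha, le_exp_mul_mix_of_le_weight ha.le hε (hw_anti.antitone hij) (hw_mem i).2.le ht⟩
  have hA_meas (n : ℕ) : NullMeasurableSet (A n) (mech ν m x) :=
    ((measurableSet_lt measurable_const (hm x)).inter
      (measurableSet_le (hm x) (by fun_prop))).nullMeasurableSet
  have hA_ge (n : ℕ) : c ≤ mech ν m x (A n) := by
    refine (h (w n) (hw_mem n)).trans (measure_mono_ae ?_)
    filter_upwards [ae_mech_density_pos (hm x)] with t ha hscore
    exact ⟨ha, (relScore_self_le_iff (hw_mem n) ha (hmnn x' t)).mp hscore⟩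
  refine (le_measure_iInter_of_antitone hA_anti hA_meas hA_ge).trans (measure_mono ?_)
  intro t ht
  exact le_exp_mul_of_tendsto_weight hw_lim fun n => (mem_iInter.mp ht n).2

end Mechanism

theorem stmt8_general {X T : Type*} [DecidableEq X] [MeasurableSpace T] (ν : Measure T)
    (N : X → X → Prop) (hN : Symmetric N)
    (m : X → T → ℝ) (hm : ∀ x, Measurable (m x)) (hmnn : ∀ x t, 0 ≤ m x t)
    (hprob : ∀ x, IsProbabilityMeasure (mech ν m x))
    (ε δ : ℝ) (hε : 0 < ε) (hδ : 0 ≤ δ) :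
    (∀ x x', N x x' →
        mech ν m x {t | m x t ≤ Real.exp ε * m x' t} ≥ ENNReal.ofReal (1 - δ)) ↔
    (∀ x z z', N z z' → ∀ w ∈ Set.Ioo (0:ℝ) 1,
        mech ν m x {t | relScore m x z z' w t ≤ ε} ≥ ENNReal.ofReal (1 - δ)) := by
  constructor
  · intro hpdp x z z' hzz' w hw
    by_cases hxz : x = z
    · subst hxz
      exact le_mech_relScore_self_of_le_mech hm hmnn hε.le hw (hpdp x z' hzz')
    by_cases hxz' : x = z'
    · subst hxz'
      simp_rw [relScore_comm x z x w]
      exact le_mech_relScore_self_of_le_mech hm hmnn hε.le ⟨sub_pos.mpr hw.2, by linarith [hw.1]⟩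
        (hpdp x z (hN hzz'))
    have := hprob x
    simp only [relScore_of_ne hxz hxz', hε.le, ofPred_true, measure_univ, ge_iff_le]
    exact ENNReal.ofReal_le_one.mpr (by linarith)
  · intro hpp x x' hxx'
    have := hprob x
    exact le_mech_of_forall_le_mech_relScore_self hm hmnn hε.le fun w hw => hpp x x x' hxx' w hw

/-- a mechanism with densities `m(·|x)` is `(ε,δ)`-probabilistically
differentially private iff it is `(L, ℋ, ε, δ)`-persuasively private, where `L` is the discrete
negative log-probability score and `ℋ` is the class of two-point priors `w δ_z + (1−w) δ_{z′}`,
`w ∈ (0,1)`, supported on neighbouring pairs `z ∼ z′`. -/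
theorem stmt8 {X T : Type*} [DecidableEq X] [MeasurableSpace T] (ν : Measure T)
    (N : X → X → Prop) (hN : Symmetric N)
    (m : X → T → ℝ) (hm : ∀ x, Measurable (m x)) (hmnn : ∀ x t, 0 ≤ m x t)
    (hprob : ∀ x, IsProbabilityMeasure (mech ν m x))
    (ε δ : ℝ) (hε : 0 < ε) (hδ : 0 ≤ δ) (hδ1 : δ ≤ 1) :
    (∀ x x', N x x' →
        mech ν m x {t | m x t ≤ Real.exp ε * m x' t} ≥ ENNReal.ofReal (1 - δ)) ↔
    (∀ x z z', N z z' → ∀ w ∈ Set.Ioo (0:ℝ) 1,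
        mech ν m x {t | relScore m x z z' w t ≤ ε} ≥ ENNReal.ofReal (1 - δ)) :=
  stmt8_general ν N hN m hm hmnn hprob ε δ hε hδ
end

section
/- Let Φ ∈ ℝ^{n×n} be a symmetric positive definite correlation matrix with largest and smallest eigenvalues λ₁ ≥ 1 ≥ λ_n > 0, and let σ ∈ ℝ^n have positive entries. With v_i = (1/n) e_i^⊤ Φ σ, v = (1/n²) σ^⊤ Φ σ, and γ_i = σ − (e_i^⊤ Φ σ) e_i, one has 1 − v_i²/v = (γ_i^⊤ Φ γ_i)/(σ^⊤ Φ σ) ≥ (λ_n/λ₁) · (∑_{j≠i} σ_j²)/‖σ‖₂² ≥ (λ_n/λ₁) · (1 − σ_i²/‖σ‖₂²). -/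
open Matrix

/-!
Write `s = σᵀΦσ` and `c = (Φσ)ᵢ`. Since `Φ` is symmetric with `Φᵢᵢ = 1`, deflating `σ` along
`eᵢ` gives `γᵢᵀΦγᵢ = s - 2c² + c² = s - c²`, and `1 - vᵢ²/v = 1 - c²/s` because the factors of
`n` cancel. The Rayleigh bounds give `γᵢᵀΦγᵢ ≥ λₙ‖γᵢ‖² ≥ λₙ ∑_{j≠i} σⱼ²`, as `γᵢ` agrees with
`σ` off `i`, and `s ≤ λ₁‖σ‖²`.
-/

open Finset

theorem Matrix.IsSymm.sub_smul_single_dotProduct_mulVec {ι R : Type*} [Fintype ι]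
    [DecidableEq ι] [CommRing R] {A : Matrix ι ι R} (hA : A.IsSymm) (x : ι → R) (i : ι)
    (c : R) :
    (x - c • Pi.single i 1) ⬝ᵥ A *ᵥ (x - c • Pi.single i 1) =
      x ⬝ᵥ A *ᵥ x - 2 * c * (A *ᵥ x) i + c ^ 2 * A i i := by
  have hx_col : x ⬝ᵥ A.col i = (A *ᵥ x) i := by
    simp only [dotProduct, mulVec, col_apply, hA.apply, mul_comm]
  simp only [mulVec_sub, mulVec_smul, sub_dotProduct, dotProduct_sub, smul_dotProduct,
    dotProduct_smul, single_one_dotProduct, mulVec_single_one, hx_col, col_apply, smul_eq_mul]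
  ring

theorem sum_sdiff_singleton_sq_le_sum_sq_sub_smul_single {ι R : Type*} [Fintype ι]
    [DecidableEq ι] [CommRing R] [LinearOrder R] [IsStrictOrderedRing R]
    (x : ι → R) (i : ι) (c : R) :
    ∑ j ∈ univ \ {i}, x j ^ 2 ≤ ∑ j, (x - c • Pi.single i 1 : ι → R) j ^ 2 := by
  rw [sum_eq_sum_sdiff_singleton_add (mem_univ i)]
  refine le_add_of_le_of_nonneg (sum_le_sum fun j hj => ?_) (sq_nonneg _)
  rw [mem_sdiff, mem_singleton] at hj
  simp [Pi.single_eq_of_ne hj.2]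

theorem mul_div_le_quadForm_div_of_rayleigh {ι : Type*} [Fintype ι] {A : Matrix ι ι ℝ} {lmin lmax : ℝ}
    (hlmin : 0 ≤ lmin)
    (hRay : ∀ x : ι → ℝ, lmin * ∑ j, x j ^ 2 ≤ x ⬝ᵥ A *ᵥ x ∧ x ⬝ᵥ A *ᵥ x ≤ lmax * ∑ j, x j ^ 2)
    {x y : ι → ℝ} (hy : 0 < y ⬝ᵥ A *ᵥ y) {S : ℝ} (hS : S ≤ ∑ j, x j ^ 2) :
    lmin / lmax * (S / ∑ j, y j ^ 2) ≤ (x ⬝ᵥ A *ᵥ x) / (y ⬝ᵥ A *ᵥ y) := by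
  have hx : lmin * S ≤ x ⬝ᵥ A *ᵥ x := (mul_le_mul_of_nonneg_left hS hlmin).trans (hRay x).1
  have hx₀ : 0 ≤ x ⬝ᵥ A *ᵥ x := (mul_nonneg hlmin (by positivity)).trans (hRay x).1
  rw [div_mul_div_comm]
  exact div_le_div₀ hx₀ hx hy (hRay y).2

theorem stmt10_general {n : ℕ} (Φ : Matrix (Fin n) (Fin n) ℝ)
    (hΦ : Φ.PosDef) (hdiag : ∀ i, Φ i i = 1)
    (σ : Fin n → ℝ) (hσ : ∀ i, 0 < σ i)
    (lam₁ lamₙ : ℝ) (hlamₙ : 0 < lamₙ)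
    (hRay : ∀ γ : Fin n → ℝ, lamₙ * (∑ j, γ j ^ 2) ≤ γ ⬝ᵥ Φ.mulVec γ ∧
      γ ⬝ᵥ Φ.mulVec γ ≤ lam₁ * (∑ j, γ j ^ 2)) :
    ∀ i : Fin n,
      let vi := (1 / (n : ℝ)) * Φ.mulVec σ i
      let v := (1 / (n : ℝ) ^ 2) * (σ ⬝ᵥ Φ.mulVec σ)
      let γ := σ - Φ.mulVec σ i • (Pi.single i 1 : Fin n → ℝ)
      1 - vi ^ 2 / v = (γ ⬝ᵥ Φ.mulVec γ) / (σ ⬝ᵥ Φ.mulVec σ) ∧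
      (lamₙ / lam₁) * ((∑ j ∈ Finset.univ \ {i}, σ j ^ 2) / ∑ j, σ j ^ 2) ≤
        (γ ⬝ᵥ Φ.mulVec γ) / (σ ⬝ᵥ Φ.mulVec σ) ∧
      (lamₙ / lam₁) * (1 - σ i ^ 2 / ∑ j, σ j ^ 2) ≤
        (lamₙ / lam₁) * ((∑ j ∈ Finset.univ \ {i}, σ j ^ 2) / ∑ j, σ j ^ 2) := by
  intro i vi v γ
  have hs : 0 < σ ⬝ᵥ Φ *ᵥ σ := by
    simpa using hΦ.dotProduct_mulVec_pos (x := σ) fun h => (hσ i).ne' (congrFun h i)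
  have hN : 0 < ∑ j, σ j ^ 2 := sum_pos (fun j _ => pow_pos (hσ j) 2) ⟨i, mem_univ i⟩
  have hγ : γ ⬝ᵥ Φ *ᵥ γ = σ ⬝ᵥ Φ *ᵥ σ - (Φ *ᵥ σ) i ^ 2 := by
    rw [(isHermitian_iff_isSymm.mp hΦ.isHermitian).sub_smul_single_dotProduct_mulVec, hdiag]
    ring
  have hn : (n : ℝ) ≠ 0 := by exact_mod_cast i.pos.ne'
  refine ⟨?_, ?_, ?_⟩
  · simp only [vi, v, hγ]
    field_simp
  · exact mul_div_le_quadForm_div_of_rayleigh hlamₙ.le hRay hs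
      (sum_sdiff_singleton_sq_le_sum_sq_sub_smul_single σ i _)
  · rw [one_sub_div hN.ne', ← sum_erase_eq_sub (mem_univ i), sdiff_singleton_eq_erase]

/-- for a positive definite correlation matrix `Φ` with extreme eigenvalues
`lam₁ ≥ 1 ≥ lamₙ > 0` (expressed via the Rayleigh-quotient bounds `hRay`), and `σ` with positive
entries, setting `vᵢ = (1/n) eᵢᵀΦσ`, `v = (1/n²) σᵀΦσ`, `γᵢ = σ − (eᵢᵀΦσ)eᵢ`, one has
`1 − vᵢ²/v = γᵢᵀΦγᵢ/σᵀΦσ ≥ (lamₙ/lam₁)·(∑_{j≠i} σⱼ²)/‖σ‖² ≥ (lamₙ/lam₁)·(1 − σᵢ²/‖σ‖²)`. -/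
theorem stmt10 {n : ℕ} (hn : 2 ≤ n) (Φ : Matrix (Fin n) (Fin n) ℝ)
    (hΦ : Φ.PosDef) (hdiag : ∀ i, Φ i i = 1)
    (σ : Fin n → ℝ) (hσ : ∀ i, 0 < σ i)
    (lam₁ lamₙ : ℝ) (hlam₁ : 1 ≤ lam₁) (hlamₙ : 0 < lamₙ) (hlamₙ1 : lamₙ ≤ 1)
    (hRay : ∀ γ : Fin n → ℝ, lamₙ * (∑ j, γ j ^ 2) ≤ γ ⬝ᵥ Φ.mulVec γ ∧
      γ ⬝ᵥ Φ.mulVec γ ≤ lam₁ * (∑ j, γ j ^ 2)) :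
    ∀ i : Fin n,
      let vi := (1 / (n : ℝ)) * Φ.mulVec σ i
      let v := (1 / (n : ℝ) ^ 2) * (σ ⬝ᵥ Φ.mulVec σ)
      let γ := σ - Φ.mulVec σ i • (Pi.single i 1 : Fin n → ℝ)
      1 - vi ^ 2 / v = (γ ⬝ᵥ Φ.mulVec γ) / (σ ⬝ᵥ Φ.mulVec σ) ∧
      (lamₙ / lam₁) * ((∑ j ∈ Finset.univ \ {i}, σ j ^ 2) / ∑ j, σ j ^ 2) ≤
        (γ ⬝ᵥ Φ.mulVec γ) / (σ ⬝ᵥ Φ.mulVec σ) ∧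
      (lamₙ / lam₁) * (1 - σ i ^ 2 / ∑ j, σ j ^ 2) ≤
        (lamₙ / lam₁) * ((∑ j ∈ Finset.univ \ {i}, σ j ^ 2) / ∑ j, σ j ^ 2) :=
  stmt10_general Φ hΦ hdiag σ hσ lam₁ lamₙ hlamₙ hRay
end

section
/- Let Q = N(μ,Σ) on ℝ^n with Σ positive definite, x ∈ ℝ^n, x̄ = (1/n)∑x_i, μ̄ = (1/n)∑μ_i. With posterior marginal mean μ_i + σ_i(v_i/v)(x̄−μ̄) and variance σ_i²(1−v_i²/v) as from Gaussian conditioning on the mean, the change in the marginal Dawid–Sebastiani score satisfies Δ_i := [(μ_i−x_i)²/σ_i² + log σ_i²] − [(μ_i(Q_{x̄})−x_i)²/σ_i²(Q_{x̄}) + log σ_i²(Q_{x̄})] ≤ (x̄−μ̄)²/v − log(1 − v_i²/v). -/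
/-!
Write `d = x̄ - μ̄` and `s = 1 - vᵢ²/v`. The logarithmic terms contribute exactly `-log s`, since
`log (σᵢ² s) = log σᵢ² + log s`. Completing the square in the quadratic terms shows that they
contribute `d²/v` minus the square `(d + vᵢ(μᵢ - xᵢ)/σᵢ)² / (v - vᵢ²)`, which is nonnegative
because `vᵢ² < v`.
-/

lemma quadratic_score_change_eq {m x d σ w v : ℝ} (hσ : σ ≠ 0) (hv : w ^ 2 < v) :
    (m - x) ^ 2 / σ ^ 2 - (m + σ * (w / v) * d - x) ^ 2 / (σ ^ 2 * (1 - w ^ 2 / v)) =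
      d ^ 2 / v - (d + w * (m - x) / σ) ^ 2 / (v - w ^ 2) := by
  have hv0 : v ≠ 0 := (lt_of_le_of_lt (sq_nonneg w) hv).ne'
  have hgap : v - w ^ 2 ≠ 0 := (sub_pos.mpr hv).ne'
  have hs : 1 - w ^ 2 / v ≠ 0 := by
    rwa [one_sub_div hv0, div_ne_zero_iff, and_iff_left hv0]
  field_simp
  ring

lemma quadratic_score_change_le {m x d σ w v : ℝ} (hσ : σ ≠ 0) (hv : w ^ 2 < v) :
    (m - x) ^ 2 / σ ^ 2 - (m + σ * (w / v) * d - x) ^ 2 / (σ ^ 2 * (1 - w ^ 2 / v)) ≤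
      d ^ 2 / v := by
  rw [quadratic_score_change_eq hσ hv, sub_le_self_iff]
  exact div_nonneg (sq_nonneg _) (sub_pos.mpr hv).le

/-- with posterior marginal mean `μᵢ + σᵢ(vᵢ/v)(x̄ − μ̄)` and posterior marginal
variance `σᵢ²(1 − vᵢ²/v)` from Gaussian conditioning on the mean, the change in the marginal
Dawid–Sebastiani score satisfies
`Δᵢ = [(μᵢ−xᵢ)²/σᵢ² + log σᵢ²] − [(μᵢ(Q_x̄)−xᵢ)²/σᵢ²(Q_x̄) + log σᵢ²(Q_x̄)]
   ≤ (x̄−μ̄)²/v − log(1 − vᵢ²/v)`. -/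
theorem stmt12 (μi xi xbar μbar σi vi v : ℝ) (hσ : 0 < σi) (hv : vi ^ 2 < v) :
    ((μi - xi) ^ 2 / σi ^ 2 + Real.log (σi ^ 2)) -
      ((μi + σi * (vi / v) * (xbar - μbar) - xi) ^ 2 / (σi ^ 2 * (1 - vi ^ 2 / v)) +
        Real.log (σi ^ 2 * (1 - vi ^ 2 / v))) ≤
      (xbar - μbar) ^ 2 / v - Real.log (1 - vi ^ 2 / v) := by
  have hv0 : 0 < v := lt_of_le_of_lt (sq_nonneg vi) hv
  have hs : 0 < 1 - vi ^ 2 / v := by rwa [sub_pos, div_lt_one hv0]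
  rw [Real.log_mul (pow_pos hσ 2).ne' hs.ne']
  linarith [quadratic_score_change_le (m := μi) (x := xi) (d := xbar - μbar) hσ.ne' hv]
end

section
/- The deterministic mechanism M(x,·) = δ_{x̄} releasing the exact empirical average x̄ = (1/n)∑x_i satisfies (𝓘, 𝒢_x^r, r₁ + log r₂, 0)-persuasive privacy: for every x ∈ ℝ^n, every Gaussian prior Q ∈ 𝒢_x^r, and every i ∈ {1,…,n}, the change in the marginal Dawid–Sebastiani score upon Bayes updating with x̄ satisfies D_i(Q,x) − D_i(Q_{x̄},x) ≤ r₁ + log r₂. -/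
/-!
Write `w = Φσ` and `V = σᵀΦσ = n²Σ̄`. Conditioning on `x̄` multiplies the `i`-th marginal variance
by `1 - wᵢ²/V`, which is the squared `Φ`-distance from `eᵢ` to the line through `σ`. The Rayleigh
bound makes it at least `λₙ` times the Euclidean squared distance `1 - σᵢ²/‖σ‖²`, and by the
condition-number assumption that is at least `λ₁/r₂ ≥ 1/r₂`: the log-variance term grows by at most
`log r₂`. The standardized squared error drops by `(x̄-μ̄)²/Σ̄` minus a square, so by at most `r₁`.
-/

open Matrix

theorem Matrix.IsSymm.dotProduct_sub_smul_mulVec_sub_smul {ι R : Type*} [Fintype ι] [CommRing R]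
    {Φ : Matrix ι ι R} (hΦ : Φ.IsSymm) (u w : ι → R) (t : R) :
    (u - t • w) ⬝ᵥ Φ *ᵥ (u - t • w) =
      u ⬝ᵥ Φ *ᵥ u - 2 * t * (u ⬝ᵥ Φ *ᵥ w) + t ^ 2 * (w ⬝ᵥ Φ *ᵥ w) := by
  have hcomm : w ⬝ᵥ Φ *ᵥ u = u ⬝ᵥ Φ *ᵥ w := by
    rw [dotProduct_mulVec, ← hΦ.eq, vecMul_transpose, dotProduct_comm, hΦ.eq]
  simp only [mulVec_sub, mulVec_smul, dotProduct_sub, sub_dotProduct, dotProduct_smul,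
    smul_dotProduct, smul_eq_mul, hcomm]
  ring

theorem sub_sq_div_le_quadratic {a b c : ℝ} (hc : 0 < c) (t : ℝ) :
    a - b ^ 2 / c ≤ a - 2 * t * b + t ^ 2 * c := by
  have : 0 ≤ (t * c - b) ^ 2 / c := by positivity
  have e : (t * c - b) ^ 2 / c = t ^ 2 * c - 2 * t * b + b ^ 2 / c := by
    field_simp; ring
  linarith

theorem quadratic_at_vertex {a b c : ℝ} (hc : c ≠ 0) :
    a - 2 * (b / c) * b + (b / c) ^ 2 * c = a - b ^ 2 / c := by
  field_simp; ring

/-- Both sides are minima over `t` of the quadratic `t ↦ q(u - t • w)`, for `q` the Euclidean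
and the `Φ`-form respectively. -/
theorem mul_sub_sq_div_le_of_rayleigh {ι : Type*} [Fintype ι] {Φ : Matrix ι ι ℝ} (hΦ : Φ.IsSymm)
    {lam : ℝ} (hlam : 0 < lam) (hRay : ∀ γ, lam * (γ ⬝ᵥ γ) ≤ γ ⬝ᵥ Φ *ᵥ γ)
    (u : ι → ℝ) {w : ι → ℝ} (hw : w ≠ 0) :
    lam * (u ⬝ᵥ u - (u ⬝ᵥ w) ^ 2 / (w ⬝ᵥ w)) ≤
      u ⬝ᵥ Φ *ᵥ u - (u ⬝ᵥ Φ *ᵥ w) ^ 2 / (w ⬝ᵥ Φ *ᵥ w) := by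
  classical
  have hww : 0 < w ⬝ᵥ w := by simpa using dotProduct_star_self_pos_iff.2 hw
  have hV : 0 < w ⬝ᵥ Φ *ᵥ w := lt_of_lt_of_le (by positivity) (hRay w)
  set t := (u ⬝ᵥ Φ *ᵥ w) / (w ⬝ᵥ Φ *ᵥ w)
  calc lam * (u ⬝ᵥ u - (u ⬝ᵥ w) ^ 2 / (w ⬝ᵥ w))
      ≤ lam * ((u - t • w) ⬝ᵥ (u - t • w)) := by
        gcongr
        have h := isSymm_one.dotProduct_sub_smul_mulVec_sub_smul u w t
        simp only [one_mulVec] at h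
        rw [h]
        exact sub_sq_div_le_quadratic hww t
    _ ≤ (u - t • w) ⬝ᵥ Φ *ᵥ (u - t • w) := hRay _
    _ = u ⬝ᵥ Φ *ᵥ u - (u ⬝ᵥ Φ *ᵥ w) ^ 2 / (w ⬝ᵥ Φ *ᵥ w) := by
        rw [hΦ.dotProduct_sub_smul_mulVec_sub_smul, quadratic_at_vertex hV.ne']

theorem inv_le_one_sub_sq_div_of_condition_number {ι : Type*} [Fintype ι] [DecidableEq ι]
    {Φ : Matrix ι ι ℝ} (hΦ : Φ.IsSymm) {lam₁ lamₙ r : ℝ} (hlamₙ : 0 < lamₙ) (hr : 0 < r)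
    (hlow : ∀ γ, lamₙ * (γ ⬝ᵥ γ) ≤ γ ⬝ᵥ Φ *ᵥ γ) {σ : ι → ℝ} (hσ : σ ≠ 0) {i : ι}
    (hdiag : Φ i i = 1) (hlam₁ : 1 ≤ lam₁)
    (hcond : lam₁ / lamₙ ≤ r * (1 - σ i ^ 2 / (σ ⬝ᵥ σ))) :
    r⁻¹ ≤ 1 - (Φ *ᵥ σ) i ^ 2 / (σ ⬝ᵥ Φ *ᵥ σ) := by
  have key := mul_sub_sq_div_le_of_rayleigh hΦ hlamₙ hlow (Pi.single i 1) hσ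
  simp only [single_dotProduct, mulVec_single_one, col_apply, Pi.single_eq_same, hdiag,
    one_mul] at key
  calc r⁻¹ ≤ lam₁ * r⁻¹ := le_mul_of_one_le_left (by positivity) hlam₁
    _ = lamₙ * (lam₁ / lamₙ / r) := by field_simp
    _ ≤ lamₙ * (1 - σ i ^ 2 / (σ ⬝ᵥ σ)) := by
        gcongr
        rwa [div_le_iff₀' hr]
    _ ≤ 1 - (Φ *ᵥ σ) i ^ 2 / (σ ⬝ᵥ Φ *ᵥ σ) := key

theorem sq_div_sub_conditional_sq_div_le {s v a d x m : ℝ} (hs : s ≠ 0) (hv : 0 < v)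
    (hc : 0 < 1 - a ^ 2 / v) :
    (x - m) ^ 2 / s ^ 2 - (x - (m + s * (a / v) * d)) ^ 2 / (s ^ 2 * (1 - a ^ 2 / v)) ≤
      d ^ 2 / v := by
  have hva : 0 < v - a ^ 2 := by
    have := mul_pos hc hv
    rwa [sub_mul, div_mul_cancel₀ _ hv.ne', one_mul] at this
  have hid : (x - m) ^ 2 / s ^ 2 - (x - (m + s * (a / v) * d)) ^ 2 / (s ^ 2 * (1 - a ^ 2 / v)) =
      d ^ 2 / v - (s * d - (x - m) * a) ^ 2 / (s ^ 2 * (v - a ^ 2)) := by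
    rw [one_sub_div hv.ne']
    field_simp
    ring
  have : 0 ≤ (s * d - (x - m) * a) ^ 2 / (s ^ 2 * (v - a ^ 2)) := by positivity
  linarith

theorem log_sub_log_mul_le {s c r : ℝ} (hs : 0 < s) (hr : 0 < r) (hc : r⁻¹ ≤ c) :
    Real.log s - Real.log (s * c) ≤ Real.log r := by
  have hc0 : 0 < c := lt_of_lt_of_le (inv_pos.2 hr) hc
  rw [Real.log_mul hs.ne' hc0.ne', sub_add_cancel_left, neg_le, ← Real.log_inv]
  exact Real.log_le_log (inv_pos.2 hr) hc

theorem stmt13_general {n : ℕ}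
    (x μ σ : Fin n → ℝ) (hσ : ∀ i, 0 < σ i)
    (Φ : Matrix (Fin n) (Fin n) ℝ) (hΦ : Φ.PosDef) (hdiag : ∀ i, Φ i i = 1)
    (lam₁ lamₙ : ℝ) (hlamₙ : 0 < lamₙ)
    (hRay : ∀ γ : Fin n → ℝ, lamₙ * (∑ j, γ j ^ 2) ≤ γ ⬝ᵥ Φ.mulVec γ ∧
      γ ⬝ᵥ Φ.mulVec γ ≤ lam₁ * (∑ j, γ j ^ 2))
    (r₁ r₂ : ℝ) (hr₂ : 1 < r₂) :
    let xbar := (1 / (n : ℝ)) * ∑ i, x i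
    let μbar := (1 / (n : ℝ)) * ∑ i, μ i
    let vi : Fin n → ℝ := fun i => (1 / (n : ℝ)) * ∑ j, Φ i j * σ j
    let v := (1 / (n : ℝ)) * ∑ i, σ i * vi i
    ((xbar - μbar) ^ 2 / v ≤ r₁) →
    (∀ i, lam₁ / lamₙ ≤ r₂ * (1 - σ i ^ 2 / ∑ j, σ j ^ 2)) →
    ∀ i, (Real.log (σ i ^ 2) + (x i - μ i) ^ 2 / σ i ^ 2) -
        (Real.log (σ i ^ 2 * (1 - vi i ^ 2 / v)) +
          (x i - (μ i + σ i * (vi i / v) * (xbar - μbar))) ^ 2 /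
            (σ i ^ 2 * (1 - vi i ^ 2 / v))) ≤
      r₁ + Real.log r₂ := by
  intro xbar μbar vi v hmean hcond i
  have hn : (0 : ℝ) < n := by exact_mod_cast i.pos
  have hσ0 : σ ≠ 0 := fun h => (hσ i).ne' (congrFun h i)
  have hsumsq : ∀ γ : Fin n → ℝ, ∑ j, γ j ^ 2 = γ ⬝ᵥ γ := fun γ => by simp [dotProduct, sq]
  simp only [hsumsq] at hRay hcond
  have hV : 0 < σ ⬝ᵥ Φ *ᵥ σ := hΦ.dotProduct_mulVec_pos hσ0
  have hvi : ∀ k, vi k = (Φ *ᵥ σ) k / n := fun k => by simp only [vi, mulVec, dotProduct]; ring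
  have hv : v = (σ ⬝ᵥ Φ *ᵥ σ) / n ^ 2 := by
    simp only [v, hvi, dotProduct, ← mul_div_assoc, ← Finset.sum_div]
    ring
  have hratio : 1 - vi i ^ 2 / v = 1 - (Φ *ᵥ σ) i ^ 2 / (σ ⬝ᵥ Φ *ᵥ σ) := by
    rw [hvi, hv]; field_simp
  have hlam₁ : 1 ≤ lam₁ := by
    simpa [mulVec_single_one, hdiag] using (hRay (Pi.single i 1)).2
  have hc : r₂⁻¹ ≤ 1 - vi i ^ 2 / v := hratio ▸
    inv_le_one_sub_sq_div_of_condition_number (isHermitian_iff_isSymm.1 hΦ.1) hlamₙ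
      (by linarith) (fun γ => (hRay γ).1) hσ0 (hdiag i) hlam₁ (hcond i)
  have hlog := log_sub_log_mul_le (pow_pos (hσ i) 2) (by linarith) hc
  have hquad := sq_div_sub_conditional_sq_div_le (d := xbar - μbar) (x := x i) (m := μ i)
    (hσ i).ne' (by rw [hv]; positivity) (lt_of_lt_of_le (by positivity) hc)
  linarith

/-- the deterministic average mechanism `M(x,·) = δ_{x̄}` satisfies
`(𝓘, 𝒢ₓʳ, r₁ + log r₂, 0)`-persuasive privacy: for every dataset `x ∈ ℝⁿ` (`n ≥ 2`), every
Gaussian prior `N(μ, Σ)` in the class `𝒢ₓʳ` — i.e. `(x̄−μ̄)²/Σ̄ ≤ r₁` and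
`c_Φ = λ₁/λₙ ≤ r₂(1 − σᵢ²/‖σ‖²)` for all `i`, where `Σ = σᵀΦσ` with correlation matrix `Φ`
(eigenvalue bounds expressed via the Rayleigh hypothesis `hRay`) — and every coordinate `i`,
the drop in the marginal Dawid–Sebastiani score upon Bayes updating with `x̄` is at most
`r₁ + log r₂`. Here `Σ̄ = v`, `vᵢ = (1/n)∑ⱼ Φᵢⱼσⱼ`, `v = (1/n)∑ᵢ σᵢvᵢ`, and the posterior
marginal mean and variance are `μᵢ + σᵢ(vᵢ/v)(x̄−μ̄)` and `σᵢ²(1 − vᵢ²/v)`. -/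
theorem stmt13 {n : ℕ} (hn : 2 ≤ n)
    (x μ σ : Fin n → ℝ) (hσ : ∀ i, 0 < σ i)
    (Φ : Matrix (Fin n) (Fin n) ℝ) (hΦ : Φ.PosDef) (hdiag : ∀ i, Φ i i = 1)
    (lam₁ lamₙ : ℝ) (hlamₙ : 0 < lamₙ)
    (hRay : ∀ γ : Fin n → ℝ, lamₙ * (∑ j, γ j ^ 2) ≤ γ ⬝ᵥ Φ.mulVec γ ∧
      γ ⬝ᵥ Φ.mulVec γ ≤ lam₁ * (∑ j, γ j ^ 2))
    (r₁ r₂ : ℝ) (hr₁ : 0 < r₁) (hr₂ : 1 < r₂) :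
    let xbar := (1 / (n : ℝ)) * ∑ i, x i
    let μbar := (1 / (n : ℝ)) * ∑ i, μ i
    let vi : Fin n → ℝ := fun i => (1 / (n : ℝ)) * ∑ j, Φ i j * σ j
    let v := (1 / (n : ℝ)) * ∑ i, σ i * vi i
    ((xbar - μbar) ^ 2 / v ≤ r₁) →
    (∀ i, lam₁ / lamₙ ≤ r₂ * (1 - σ i ^ 2 / ∑ j, σ j ^ 2)) →
    ∀ i, (Real.log (σ i ^ 2) + (x i - μ i) ^ 2 / σ i ^ 2) -
        (Real.log (σ i ^ 2 * (1 - vi i ^ 2 / v)) +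
          (x i - (μ i + σ i * (vi i / v) * (xbar - μbar))) ^ 2 /
            (σ i ^ 2 * (1 - vi i ^ 2 / v))) ≤
      r₁ + Real.log r₂ :=
  stmt13_general x μ σ hσ Φ hΦ hdiag lam₁ lamₙ hlamₙ hRay r₁ r₂ hr₂
end
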